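/- arXiv:1411.0853 — 2 statements merged into one kernel-verified Lean document; each statement's English description precedes it below -/
import Mathlib

section
/- Fix n ≥ 1 and set t₀ = 1. Consider f(t) = ∑_{j=1}^{n} t_{j-1}/t_j on the set D = { t ∈ (0,∞)ⁿ : t_j² ≤ t_{j-1}·t_{j+1} for all 1 ≤ j ≤ n−1 } (with t₀ = 1). Then: (i) if t, s ∈ D agree in all coordinates except the j-th, where t_j ≤ s_j, then f(s) ≤ f(t); (ii) if t, s ∈ (0,∞)ⁿ agree in all coordinates except the n-th, where t_n < s_n, then f(s) < f(t). -/
lemma key_ineq (a b x y : ℝ) (hb : 0 < b) (hx : 0 < x) (hy : 0 < y)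
    (hxy : x ≤ y) (h1 : x ^ 2 ≤ a * b) (h2 : y ^ 2 ≤ a * b) :
    a / y + y / b ≤ a / x + x / b := by
  have hab : x * y ≤ a * b := by nlinarith
  rw [div_add_div _ _ hy.ne' hb.ne', div_add_div _ _ hx.ne' hb.ne',
    div_le_div_iff₀ (by positivity) (by positivity)]
  nlinarith [mul_nonneg (mul_nonneg hb.le (sub_nonneg.2 hxy)) (sub_nonneg.2 hab)]

lemma pred_eq (n j₀ : ℕ) (t s : ℕ → ℝ) (ht0 : t 0 = 1) (hs0 : s 0 = 1)
    (hagree : ∀ j, 1 ≤ j → j ≤ n → j ≠ j₀ → s j = t j)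
    (j : ℕ) (h1 : 1 ≤ j) (h2 : j ≤ n) (h3 : j ≠ j₀ + 1) :
    s (j - 1) = t (j - 1) := by
  rcases eq_or_lt_of_le h1 with h | h
  · have : j - 1 = 0 := by omega
    rw [this, ht0, hs0]
  · exact hagree (j - 1) (by omega) (by omega) (by omega)

/-- Monotonicity of `f(t) = ∑_{j=1}^n t (j-1) / t j` (with `t 0 = 1`):
(i) on the set `D = {t : t j ^ 2 ≤ t (j-1) * t (j+1) for 1 ≤ j ≤ n-1}` the function is
decreasing in each variable `t j`; (ii) on all of `(0,∞)ⁿ` it is strictly decreasing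
in the last variable `t n`. -/
theorem f_monotonicity (n : ℕ) (hn : 1 ≤ n) :
    (∀ t s : ℕ → ℝ, t 0 = 1 → s 0 = 1 →
      (∀ j, 1 ≤ j → j ≤ n → 0 < t j) → (∀ j, 1 ≤ j → j ≤ n → 0 < s j) →
      (∀ j, 1 ≤ j → j ≤ n - 1 → t j ^ 2 ≤ t (j - 1) * t (j + 1)) →
      (∀ j, 1 ≤ j → j ≤ n - 1 → s j ^ 2 ≤ s (j - 1) * s (j + 1)) →
      ∀ j₀, 1 ≤ j₀ → j₀ ≤ n →
        (∀ j, 1 ≤ j → j ≤ n → j ≠ j₀ → s j = t j) → t j₀ ≤ s j₀ →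
        ∑ j ∈ Finset.Icc 1 n, s (j - 1) / s j ≤ ∑ j ∈ Finset.Icc 1 n, t (j - 1) / t j) ∧
    (∀ t s : ℕ → ℝ, t 0 = 1 → s 0 = 1 →
      (∀ j, 1 ≤ j → j ≤ n → 0 < t j) → (∀ j, 1 ≤ j → j ≤ n → 0 < s j) →
      (∀ j, 1 ≤ j → j ≤ n → j ≠ n → s j = t j) → t n < s n →
      ∑ j ∈ Finset.Icc 1 n, s (j - 1) / s j < ∑ j ∈ Finset.Icc 1 n, t (j - 1) / t j) := by
  constructor
  · intro t s ht0 hs0 htpos hspos htconv hsconv j₀ hj₀1 hj₀n hagree hts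
    have ht0' : 0 < t 0 := by rw [ht0]; norm_num
    have htpos' : ∀ j, j ≤ n → 0 < t j := by
      intro j hj
      rcases Nat.eq_zero_or_pos j with h | h
      · rw [h]; exact ht0'
      · exact htpos j h hj
    have hspos' : ∀ j, j ≤ n → 0 < s j := by
      intro j hj
      rcases Nat.eq_zero_or_pos j with h | h
      · rw [h, hs0]; norm_num
      · exact hspos j h hj
    rcases eq_or_lt_of_le hj₀n with heq | hlt
    · -- j₀ = n : termwise
      apply Finset.sum_le_sum
      intro j hj
      rw [Finset.mem_Icc] at hj
      rcases eq_or_ne j j₀ with rfl | hne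
      · rw [pred_eq n j t s ht0 hs0 hagree j hj.1 hj.2 (by omega)]
        gcongr
        · exact (htpos' (j - 1) (by omega)).le
        · exact htpos j hj.1 hj.2
      · rw [pred_eq n j₀ t s ht0 hs0 hagree j hj.1 hj.2 (by omega),
          hagree j hj.1 hj.2 hne]
    · -- j₀ < n
      have hmem : j₀ ∈ Finset.Icc 1 n := Finset.mem_Icc.2 ⟨hj₀1, hj₀n⟩
      have hmem1 : j₀ + 1 ∈ (Finset.Icc 1 n).erase j₀ :=
        Finset.mem_erase.2 ⟨by omega, Finset.mem_Icc.2 ⟨by omega, by omega⟩⟩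
      rw [← Finset.add_sum_erase _ _ hmem, ← Finset.add_sum_erase _ _ hmem1,
        ← Finset.add_sum_erase _ (fun j => t (j-1) / t j) hmem,
        ← Finset.add_sum_erase _ (fun j => t (j-1) / t j) hmem1]
      have hrest : ∑ j ∈ ((Finset.Icc 1 n).erase j₀).erase (j₀ + 1), s (j - 1) / s j
          = ∑ j ∈ ((Finset.Icc 1 n).erase j₀).erase (j₀ + 1), t (j - 1) / t j := by
        apply Finset.sum_congr rfl
        intro j hj
        have h1 := Finset.mem_erase.1 hj
        have h2 := Finset.mem_erase.1 h1.2
        have h3 := Finset.mem_Icc.1 h2.2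
        rw [pred_eq n j₀ t s ht0 hs0 hagree j h3.1 h3.2 h1.1,
          hagree j h3.1 h3.2 h2.1]
      rw [hrest]
      have e1 : s (j₀ - 1) = t (j₀ - 1) :=
        pred_eq n j₀ t s ht0 hs0 hagree j₀ hj₀1 hj₀n (by omega)
      have e2 : s (j₀ + 1 - 1) = s j₀ := by norm_num
      have e3 : t (j₀ + 1 - 1) = t j₀ := by norm_num
      have e4 : s (j₀ + 1) = t (j₀ + 1) := hagree (j₀ + 1) (by omega) (by omega) (by omega)
      rw [← add_assoc, ← add_assoc, e1, e2, e3, e4]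
      have hkey : t (j₀ - 1) / s j₀ + s j₀ / t (j₀ + 1)
          ≤ t (j₀ - 1) / t j₀ + t j₀ / t (j₀ + 1) := by
        apply key_ineq _ _ _ _ (htpos (j₀ + 1) (by omega) (by omega))
          (htpos j₀ hj₀1 hj₀n) (hspos j₀ hj₀1 hj₀n) hts
        · exact htconv j₀ hj₀1 (by omega)
        · have := hsconv j₀ hj₀1 (by omega)
          rwa [e1, e4] at this
      linarith
  · intro t s ht0 hs0 htpos hspos hagree hts
    have hmem : n ∈ Finset.Icc 1 n := Finset.mem_Icc.2 ⟨hn, le_refl n⟩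
    rw [← Finset.add_sum_erase _ _ hmem, ← Finset.add_sum_erase _ (fun j => t (j-1)/t j) hmem]
    have hrest : ∑ j ∈ (Finset.Icc 1 n).erase n, s (j - 1) / s j
        = ∑ j ∈ (Finset.Icc 1 n).erase n, t (j - 1) / t j := by
      apply Finset.sum_congr rfl
      intro j hj
      have h1 := Finset.mem_erase.1 hj
      have h3 := Finset.mem_Icc.1 h1.2
      rw [pred_eq n n t s ht0 hs0 hagree j h3.1 h3.2 (by omega),
        hagree j h3.1 h3.2 h1.1]
    rw [hrest]
    have e1 : s (n - 1) = t (n - 1) := pred_eq n n t s ht0 hs0 hagree n hn le_rfl (by omega)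
    have hpos : 0 < t (n - 1) := by
      rcases eq_or_lt_of_le hn with h | h
      · have : n - 1 = 0 := by omega
        rw [this, ht0]; norm_num
      · exact htpos (n - 1) (by omega) (by omega)
    have : t (n - 1) / s n < t (n - 1) / t n :=
      div_lt_div_of_pos_left hpos (htpos n hn le_rfl) hts
    rw [e1]
    linarith
end

section
/- Let φ(z₁, z₂) = log(|z₁|⁴ + |z₁³ − z₂²|) and ‖z‖ = (|z₁|² + |z₂|²)^{1/2}. Then the Lelong number of φ at the origin equals 2, i.e. liminf_{z → 0, z ≠ 0} φ(z)/log‖z‖ = 2. -/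
/-! Write `r = ‖z‖`. On the axis `z₁ = 0` the quotient is `log (r ^ 2) / log r = 2`, so the
liminf is at most `2`. Conversely, for `r < 1` both `|z₁|⁴` and `|z₁³ - z₂²|` are `O(r ^ 2)`,
namely `|z₁|⁴ + |z₁³ - z₂²| ≤ 3 r ^ 2`; dividing the logarithm by `log r < 0` bounds the quotient
below by `2 + log 3 / log r`, which tends to `2`. -/

open Filter Topology

theorem Filter.liminf_eq_of_frequently_le_of_tendsto {α β : Type*}
    [ConditionallyCompleteLinearOrder β] [TopologicalSpace β] [OrderTopology β]
    {F : Filter α} {u g : α → β} {a : β} (hu : ∃ᶠ x in F, u x ≤ a)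
    (hg : Tendsto g F (𝓝 a)) (hgu : g ≤ᶠ[F] u) : liminf u F = a := by
  have : F.NeBot := (frequently_iff_neBot.1 hu).mono inf_le_left
  have hg_bdd : F.IsBoundedUnder (· ≥ ·) g := hg.isBoundedUnder_ge
  refine le_antisymm (liminf_le_of_frequently_le hu (hg_bdd.mono_ge hgu)) ?_
  calc a = liminf g F := hg.liminf_eq.symm
    _ ≤ liminf u F := liminf_le_liminf hgu hg_bdd (.of_frequently_le hu)

namespace Real

theorem add_log_div_log_le_log_div_log {A C r : ℝ} {k : ℕ} (hA : 0 < A) (hr₀ : 0 < r)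
    (hr₁ : r < 1) (h : A ≤ C * r ^ k) : k + log C / log r ≤ log A / log r := by
  have hC : 0 < C := pos_of_mul_pos_left (hA.trans_le h) (by positivity)
  have hlog_r : log r < 0 := log_neg hr₀ hr₁
  have hlog_A : log A ≤ log C + k * log r := by
    simpa [log_mul hC.ne' (pow_pos hr₀ k).ne'] using log_le_log hA h
  calc k + log C / log r = (log C + k * log r) / log r := by
        rw [add_div, mul_div_cancel_right₀ _ hlog_r.ne, add_comm]
    _ ≤ log A / log r := div_le_div_of_nonpos_of_le hlog_r.le hlog_A

theorem log_pow_div_log {x : ℝ} (n : ℕ) (hx : log x ≠ 0) : log (x ^ n) / log x = n := by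
  rw [log_pow, mul_div_cancel_right₀ _ hx]

end Real

section SqrtNormSqAddNormSq

variable {E F : Type*}

theorem norm_fst_le_sqrt_norm_sq_add_norm_sq [Norm E] [Norm F] (z : E × F) :
    ‖z.1‖ ≤ √(‖z.1‖ ^ 2 + ‖z.2‖ ^ 2) :=
  Real.le_sqrt_of_sq_le (le_add_of_nonneg_right (sq_nonneg _))

theorem norm_snd_le_sqrt_norm_sq_add_norm_sq [Norm E] [Norm F] (z : E × F) :
    ‖z.2‖ ≤ √(‖z.1‖ ^ 2 + ‖z.2‖ ^ 2) :=
  Real.le_sqrt_of_sq_le (le_add_of_nonneg_left (sq_nonneg _))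

variable [NormedAddCommGroup E] [NormedAddCommGroup F]

theorem sqrt_norm_sq_add_norm_sq_pos {z : E × F} (hz : z ≠ 0) :
    0 < √(‖z.1‖ ^ 2 + ‖z.2‖ ^ 2) := by
  by_cases h : z.1 = 0
  · have : z.2 ≠ 0 := fun h' => hz (Prod.ext h h')
    exact (norm_pos_iff.2 this).trans_le (norm_snd_le_sqrt_norm_sq_add_norm_sq z)
  · exact (norm_pos_iff.2 h).trans_le (norm_fst_le_sqrt_norm_sq_add_norm_sq z)

theorem tendsto_sqrt_norm_sq_add_norm_sq_nhdsNE_zero :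
    Tendsto (fun z : E × F => √(‖z.1‖ ^ 2 + ‖z.2‖ ^ 2)) (𝓝[≠] 0) (𝓝[>] 0) := by
  have hcont : Continuous fun z : E × F => √(‖z.1‖ ^ 2 + ‖z.2‖ ^ 2) := by fun_prop
  refine tendsto_nhdsWithin_of_tendsto_nhds_of_eventually_within _ ?_ ?_
  · simpa using (hcont.tendsto 0).mono_left nhdsWithin_le_nhds
  · filter_upwards [self_mem_nhdsWithin] with z hz using sqrt_norm_sq_add_norm_sq_pos hz

end SqrtNormSqAddNormSq

theorem norm_pow_four_add_norm_cube_sub_sq_le {R : Type*} [SeminormedRing R] {a b : R} {s : ℝ}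
    (ha : ‖a‖ ≤ s) (hb : ‖b‖ ≤ s) (hs : s ≤ 1) : ‖a‖ ^ 4 + ‖a ^ 3 - b ^ 2‖ ≤ 3 * s ^ 2 := by
  have hs₀ : 0 ≤ s := (norm_nonneg a).trans ha
  calc ‖a‖ ^ 4 + ‖a ^ 3 - b ^ 2‖ ≤ ‖a‖ ^ 4 + (‖a‖ ^ 3 + ‖b‖ ^ 2) := by
        gcongr
        exact (norm_sub_le _ _).trans
          (add_le_add (norm_pow_le' a (by norm_num)) (norm_pow_le' b (by norm_num)))
    _ ≤ s ^ 4 + (s ^ 3 + s ^ 2) := by gcongr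
    _ ≤ 3 * s ^ 2 := by nlinarith [pow_le_one₀ hs₀ hs (n := 2), pow_le_one₀ hs₀ hs (n := 1)]

theorem norm_pow_four_add_norm_cube_sub_sq_pos {R : Type*} [NormedRing R] [NoZeroDivisors R]
    {z : R × R} (hz : z ≠ 0) : 0 < ‖z.1‖ ^ 4 + ‖z.1 ^ 3 - z.2 ^ 2‖ := by
  by_cases h : z.1 = 0
  · have : z.2 ≠ 0 := fun h' => hz (Prod.ext h h')
    simpa [h] using this
  · have := norm_pos_iff.2 h
    positivity

theorem log_norm_pow_four_add_norm_cube_sub_sq_div_log_of_fst_eq_zero {R : Type*}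
    [NormedDivisionRing R] {w : R} (hw : Real.log ‖w‖ ≠ 0) :
    Real.log (‖(0 : R)‖ ^ 4 + ‖(0 : R) ^ 3 - w ^ 2‖) / Real.log √(‖(0 : R)‖ ^ 2 + ‖w‖ ^ 2) =
      2 := by
  simpa [Real.sqrt_sq (norm_nonneg w)] using Real.log_pow_div_log 2 hw

/-- The Lelong number of `φ = log(|z₁|⁴ + |z₁³ - z₂²|)` at the origin equals 2:
`liminf_{z → 0, z ≠ 0} φ(z) / log‖z‖ = 2`, with `‖z‖ = (|z₁|² + |z₂|²)^{1/2}`. -/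
theorem lelong_number_example :
    Filter.liminf
      (fun z : ℂ × ℂ =>
        Real.log (‖z.1‖ ^ 4 + ‖z.1 ^ 3 - z.2 ^ 2‖) /
          Real.log (Real.sqrt (‖z.1‖ ^ 2 + ‖z.2‖ ^ 2)))
      (nhdsWithin (0 : ℂ × ℂ) {z | z ≠ 0}) = 2 := by
  change liminf _ (𝓝[≠] 0) = 2
  have hr := tendsto_sqrt_norm_sq_add_norm_sq_nhdsNE_zero (E := ℂ) (F := ℂ)
  refine liminf_eq_of_frequently_le_of_tendsto
    (g := fun z => 2 + Real.log 3 / Real.log √(‖z.1‖ ^ 2 + ‖z.2‖ ^ 2)) ?_ ?_ ?_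
  · have haxis : Tendsto (fun w : ℂ => ((0 : ℂ), w)) (𝓝[≠] 0) (𝓝[≠] 0) := by
      rw [← Prod.mk_zero_zero]
      exact (Continuous.prodMk_right (0 : ℂ)).continuousWithinAt.tendsto_nhdsWithin
        fun w hw => by simpa using hw
    have hw : ∀ᶠ w in 𝓝[≠] (0 : ℂ), Real.log ‖w‖ ≠ 0 := by
      filter_upwards [tendsto_norm_nhdsNE_zero (Ioo_mem_nhdsGT one_pos)] with w hw
      exact (Real.log_neg hw.1 hw.2).ne
    exact haxis.frequently (hw.mono fun w hw =>
      (log_norm_pow_four_add_norm_cube_sub_sq_div_log_of_fst_eq_zero hw).le).frequently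
  · simpa using tendsto_const_nhds.add
      (tendsto_const_nhds.div_atBot (Real.tendsto_log_nhdsGT_zero.comp hr))
  · filter_upwards [self_mem_nhdsWithin, hr (Ioo_mem_nhdsGT one_pos)] with z hz hrz
    exact_mod_cast Real.add_log_div_log_le_log_div_log (k := 2)
      (norm_pow_four_add_norm_cube_sub_sq_pos hz) hrz.1 hrz.2
      (norm_pow_four_add_norm_cube_sub_sq_le (norm_fst_le_sqrt_norm_sq_add_norm_sq z)
        (norm_snd_le_sqrt_norm_sq_add_norm_sq z) hrz.2.le)
end
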